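/- Fix a > 0 and define g(u) = ( φ(−a−u) − φ(a−u) ) / ( Φ(a−u) − Φ(−a−u) ). Then for every real x and every k > 0, g(x−k) − g(x) ≤ k. (This follows because g'(u) equals the Fisher information of the truncated Gaussian N^T(u,1,[−a,a]) minus 1, which is at least −1.) -/

import Mathlib

open MeasureTheory Real Filter

/-- Standard Gaussian density. -/
noncomputable def phi (x : ℝ) : ℝ := (Real.sqrt (2 * Real.pi))⁻¹ * Real.exp (-(x ^ 2) / 2)

/-- Standard Gaussian cumulative distribution function. -/
noncomputable def Phi (x : ℝ) : ℝ := ∫ t in Set.Iic x, phi t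

/-- Score-difference function of the unit-variance truncated Gaussian. -/
noncomputable def g (a u : ℝ) : ℝ := (phi (-a - u) - phi (a - u)) / (Phi (a - u) - Phi (-a - u))

/-!
The function `u ↦ g a u + u` is monotone. Writing `N = φ(−a−u) − φ(a−u)` and
`D = Φ(a−u) − Φ(−a−u)`, one has `D' = N`, hence `g' = N'/D − g²`. Integrating by parts against
`φ' = −tφ` identifies `N` and `N' + D` with the first and second moments of `φ` on the truncation
interval, so `g' + 1 ≥ 0` is the Cauchy–Schwarz inequality (nonnegative variance) for those moments.
-/

lemma phi_pos (x : ℝ) : 0 < phi x := by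
  unfold phi
  positivity

@[fun_prop]
lemma continuous_phi : Continuous phi := by
  unfold phi
  fun_prop

lemma integrable_phi : Integrable phi := by
  have h : phi = fun x => (√(2 * π))⁻¹ * rexp (-2⁻¹ * x ^ 2) := by
    funext x
    unfold phi
    ring_nf
  rw [h]
  exact (integrable_exp_neg_mul_sq (by norm_num)).const_mul _

lemma hasDerivAt_phi (x : ℝ) : HasDerivAt phi (-x * phi x) x := by
  refine ((((hasDerivAt_pow 2 x).neg.div_const 2).exp).const_mul (√(2 * π))⁻¹).congr_deriv ?_
  simp only [phi, Pi.neg_apply]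
  push_cast
  ring

lemma Phi_sub_Phi (c b : ℝ) : Phi b - Phi c = ∫ t in c..b, phi t :=
  intervalIntegral.integral_Iic_sub_Iic integrable_phi.integrableOn integrable_phi.integrableOn

lemma hasDerivAt_Phi (x : ℝ) : HasDerivAt Phi (phi x) x := by
  have h : HasDerivAt (fun u => Phi 0 + ∫ t in (0 : ℝ)..u, phi t) (phi x) x :=
    (intervalIntegral.integral_hasDerivAt_right integrable_phi.intervalIntegrable
      (continuous_phi.stronglyMeasurableAtFilter _ _) continuous_phi.continuousAt).const_add _
  convert h using 1
  funext u
  rw [← Phi_sub_Phi]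
  ring

lemma Phi_sub_Phi_pos {c b : ℝ} (h : c < b) : 0 < Phi b - Phi c := by
  rw [Phi_sub_Phi]
  exact intervalIntegral.intervalIntegral_pos_of_pos_on integrable_phi.intervalIntegrable
    (fun x _ => phi_pos x) h

lemma integral_mul_phi (c b : ℝ) : ∫ t in c..b, t * phi t = phi c - phi b := by
  rw [intervalIntegral.integral_eq_sub_of_hasDerivAt (f := fun s => -phi s)
    (fun t _ => (hasDerivAt_phi t).neg.congr_deriv (by ring))
    ((by fun_prop : Continuous fun t => t * phi t).intervalIntegrable _ _)]
  ring

lemma integral_sq_mul_phi (c b : ℝ) :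
    ∫ t in c..b, t ^ 2 * phi t = c * phi c - b * phi b + (Phi b - Phi c) := by
  have hderiv (t : ℝ) : HasDerivAt (fun s => -(s * phi s)) (t ^ 2 * phi t - phi t) t :=
    ((hasDerivAt_id' t).mul (hasDerivAt_phi t)).neg.congr_deriv (by ring)
  have h := intervalIntegral.integral_eq_sub_of_hasDerivAt (fun t _ => hderiv t)
    ((by fun_prop : Continuous fun t => t ^ 2 * phi t - phi t).intervalIntegrable c b)
  rw [intervalIntegral.integral_sub
    ((by fun_prop : Continuous fun t => t ^ 2 * phi t).intervalIntegrable _ _)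
    integrable_phi.intervalIntegrable, ← Phi_sub_Phi] at h
  linarith

lemma sq_integral_mul_le {w : ℝ → ℝ} {c b : ℝ} (hcb : c ≤ b) (hw : Continuous w)
    (hw0 : ∀ t ∈ Set.Icc c b, 0 ≤ w t) :
    (∫ t in c..b, t * w t) ^ 2 ≤ (∫ t in c..b, w t) * ∫ t in c..b, t ^ 2 * w t := by
  have hquad (x : ℝ) : 0 ≤ (∫ t in c..b, w t) * (x * x) + (-2 * ∫ t in c..b, t * w t) * x
      + ∫ t in c..b, t ^ 2 * w t := by
    have hexp : (fun t => (x - t) ^ 2 * w t)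
        = fun t => x * x * w t - 2 * x * (t * w t) + t ^ 2 * w t := by
      funext t
      ring
    have hnonneg : 0 ≤ ∫ t in c..b, (x - t) ^ 2 * w t :=
      intervalIntegral.integral_nonneg hcb fun t ht => mul_nonneg (sq_nonneg _) (hw0 t ht)
    have hint (f : ℝ → ℝ) (hf : Continuous f) : IntervalIntegrable f volume c b :=
      hf.intervalIntegrable c b
    rw [hexp, intervalIntegral.integral_add (hint _ (by fun_prop)) (hint _ (by fun_prop)),
      intervalIntegral.integral_sub (hint _ (by fun_prop)) (hint _ (by fun_prop)),
      intervalIntegral.integral_const_mul, intervalIntegral.integral_const_mul] at hnonneg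
    linarith
  have := discrim_le_zero hquad
  unfold discrim at this
  linarith

lemma sq_phi_sub_phi_le {c b : ℝ} (h : c < b) :
    (phi c - phi b) ^ 2 ≤ (Phi b - Phi c) * (c * phi c - b * phi b + (Phi b - Phi c)) := by
  have := sq_integral_mul_le h.le continuous_phi fun t _ => (phi_pos t).le
  rwa [integral_mul_phi, integral_sq_mul_phi, ← Phi_sub_Phi] at this

lemma hasDerivAt_g {a : ℝ} (ha : 0 < a) (u : ℝ) :
    HasDerivAt (g a) (((-a - u) * phi (-a - u) - (a - u) * phi (a - u))
      / (Phi (a - u) - Phi (-a - u)) - g a u ^ 2) u := by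
  have hD : Phi (a - u) - Phi (-a - u) ≠ 0 := (Phi_sub_Phi_pos (by linarith)).ne'
  have hphi (c : ℝ) : HasDerivAt (fun u => phi (c - u)) ((c - u) * phi (c - u)) u :=
    ((hasDerivAt_phi (c - u)).comp u ((hasDerivAt_id' u).const_sub c)).congr_deriv (by ring)
  have hPhi (c : ℝ) : HasDerivAt (fun u => Phi (c - u)) (-phi (c - u)) u :=
    ((hasDerivAt_Phi (c - u)).comp u ((hasDerivAt_id' u).const_sub c)).congr_deriv (by ring)
  refine (((hphi (-a)).sub (hphi a)).div ((hPhi a).sub (hPhi (-a))) hD).congr_deriv ?_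
  simp only [g, Pi.sub_apply]
  field_simp
  ring

lemma monotone_g_add_id {a : ℝ} (ha : 0 < a) : Monotone fun u => g a u + u := by
  change Monotone (g a + fun u => u)
  have hderiv (u : ℝ) := (hasDerivAt_g ha u).add (hasDerivAt_id' u)
  refine monotone_of_deriv_nonneg (fun u => (hderiv u).differentiableAt) fun u => ?_
  rw [(hderiv u).deriv]
  have hlt : -a - u < a - u := by linarith
  have hD := Phi_sub_Phi_pos hlt
  have hkey := sq_phi_sub_phi_le hlt
  have hg : g a u ^ 2 ≤ ((-a - u) * phi (-a - u) - (a - u) * phi (a - u))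
      / (Phi (a - u) - Phi (-a - u)) + 1 := by
    rw [g, div_pow, div_add_one hD.ne', div_le_div_iff₀ (by positivity) hD]
    nlinarith [mul_le_mul_of_nonneg_right hkey hD.le]
  linarith

/-- The score-difference function `g` satisfies `g(x−k) − g(x) ≤ k` for `k > 0`. -/
theorem g_diff_le (a : ℝ) (ha : 0 < a) :
    ∀ x k : ℝ, 0 < k → g a (x - k) - g a x ≤ k := by
  intro x k hk
  have := monotone_g_add_id ha (show x - k ≤ x by linarith)
  dsimp only at this
  linarith
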